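/- arXiv:2306.09917 — 3 statements merged into one kernel-verified Lean document; each statement's English description precedes it below -/
import Mathlib

section
/- Let a : X × X → ℝ be a bounded, symmetric, positive (a(v,v) > 0 for v ≠ 0) bilinear form on a real Hilbert space X satisfying the inf-sup condition with constant α > 0: for every u, sup over nonzero w of a(u, w)/‖w‖ ≥ α ‖u‖. Then a is coercive: a(v, v) ≥ (α²/β) ‖v‖² for all v, where β is the continuity constant of a. -/
theorem infsup_implies_coercive_of_symmetric_positive {X : Type*}
    [NormedAddCommGroup X] [InnerProductSpace ℝ X]
    (a : X →ₗ[ℝ] X →ₗ[ℝ] ℝ) (α β : ℝ) (hα : 0 < α) (hβ : 0 < β)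
    (hsym : ∀ u v : X, a u v = a v u) (hpos : ∀ v : X, v ≠ 0 → 0 < a v v)
    (hbound : ∀ u v : X, |a u v| ≤ β * ‖u‖ * ‖v‖)
    (hinfsup : ∀ u : X, α * ‖u‖ ≤ ⨆ w : {w : X // w ≠ 0}, a u w / ‖(w : X)‖) :
    ∀ v : X, (α ^ 2 / β) * ‖v‖ ^ 2 ≤ a v v := by
  have hnn : ∀ u : X, 0 ≤ a u u := by
    intro u
    by_cases h : u = 0
    · simp [h]
    · exact (hpos u h).le
  -- Cauchy-Schwarz for a
  have hCS : ∀ v w : X, (a v w) ^ 2 ≤ a v v * a w w := by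
    intro v w
    have hq : ∀ t : ℝ, 0 ≤ a w w * (t * t) + (2 * a v w) * t + a v v := by
      intro t
      have h0 := hnn (v + t • w)
      have hexp : a (v + t • w) (v + t • w)
          = a w w * (t * t) + (2 * a v w) * t + a v v := by
        simp [map_add, map_smul, hsym w v]
        ring
      linarith [hexp ▸ h0]
    have hd : (2 * a v w) ^ 2 - 4 * (a w w) * (a v v) ≤ 0 := by
      have := discrim_le_zero hq
      rwa [discrim] at this
    nlinarith [hd]
  intro v
  by_cases hv : v = 0
  · simp [hv]
  -- bound the supremum
  have hne : Nonempty {w : X // w ≠ 0} := ⟨⟨v, hv⟩⟩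
  have hsup : (⨆ w : {w : X // w ≠ 0}, a v w / ‖(w : X)‖) ≤ Real.sqrt (β * a v v) := by
    apply ciSup_le
    intro ⟨w, hw⟩
    have hwn : (0:ℝ) < ‖w‖ := norm_pos_iff.mpr hw
    have h1 : (a v w / ‖w‖) ^ 2 ≤ β * a v v := by
      have h2 : a w w ≤ β * ‖w‖ ^ 2 := by
        have := (abs_le.mp (hbound w w)).2
        nlinarith
      have h3 : (a v w) ^ 2 ≤ a v v * (β * ‖w‖ ^ 2) := by
        nlinarith [hCS v w, hnn v]
      rw [div_pow]
      rw [div_le_iff₀ (by positivity)]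
      nlinarith
    calc a v w / ‖w‖ ≤ |a v w / ‖w‖| := le_abs_self _
      _ = Real.sqrt ((a v w / ‖w‖) ^ 2) := (Real.sqrt_sq_eq_abs _).symm
      _ ≤ Real.sqrt (β * a v v) := Real.sqrt_le_sqrt h1
  have hmain : α * ‖v‖ ≤ Real.sqrt (β * a v v) := le_trans (hinfsup v) hsup
  have hsq : (α * ‖v‖) ^ 2 ≤ β * a v v := by
    have := pow_le_pow_left₀ (by positivity) hmain 2
    rwa [Real.sq_sqrt (mul_nonneg hβ.le (hnn v))] at this
  rw [div_mul_eq_mul_div, div_le_iff₀ hβ]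
  nlinarith
end

section
/- Let A be an n×n real matrix that is Hurwitz (every eigenvalue has negative real part). Then for every symmetric positive definite matrix Q there exists a symmetric positive definite matrix P satisfying the Lyapunov equation P A + Aᵀ P + Q = 0. -/
/-!
The solution is `P = ∫₀^∞ exp (t Aᵀ) Q exp (t A) dt`. Every integrand is `Eᵀ Q E` with `E`
invertible, hence positive definite, and so is `P`. The integrand `f` satisfies
`f' = Aᵀ f + f A` and tends to `0`, so integrating `f'` gives `Aᵀ P + P A = -f 0 = -Q`.

Convergence comes from the spectrum. An eigenspace of `exp B` is invariant under `B`, hence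
contains an eigenvector of `B`; this gives `σ (exp B) ⊆ exp '' σ B`, so for the complexification
`B` of a Hurwitz matrix `A` the spectral radius of `exp B` is `< 1`. Gelfand's formula then bounds
`‖exp A ^ k‖` by `C rᵏ` with `r < 1`, and writing `t = ⌊t⌋ + (t - ⌊t⌋)` turns this into
`‖exp (t A)‖ = O (e^{-αt})`.
-/

open Filter Asymptotics NormedSpace Set Matrix MeasureTheory Topology
open scoped NNReal Matrix.Norms.Operator

theorem integrableOn_Ioi_of_isBigO_exp_neg {E : Type*} [NormedAddCommGroup E] {f : ℝ → E}
    {a b : ℝ} (hb : 0 < b) (hf : ContinuousOn f (Ici a))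
    (ho : f =O[atTop] fun x => Real.exp (-b * x)) : IntegrableOn f (Ioi a) :=
  integrableOn_Ici_iff_integrableOn_Ioi (by finiteness) |>.mp <|
    (hf.locallyIntegrableOn measurableSet_Ici).integrableOn_of_isBigO_atTop
    ho ⟨Ioi b, Ioi_mem_atTop b, exp_neg_integrableOn_Ioi b hb⟩

theorem spectrum.spectralRadius_lt_of_forall_lt_of_pos {A : Type*} [NormedRing A]
    [NormedAlgebra ℂ A] [CompleteSpace A] (a : A) {r : ℝ≥0} (hr : 0 < r)
    (h : ∀ z ∈ spectrum ℂ a, ‖z‖₊ < r) : spectralRadius ℂ a < r := by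
  rcases (spectrum ℂ a).eq_empty_or_nonempty with hempty | hne
  · simpa [spectralRadius, hempty] using hr
  · exact spectrum.spectralRadius_lt_of_forall_lt_of_nonempty hne h

theorem spectrum.isBigO_pow_of_spectralRadius_lt {A : Type*} [NormedRing A] [NormedAlgebra ℂ A]
    [CompleteSpace A] {a : A} {r : ℝ≥0} (h : spectralRadius ℂ a < r) :
    (fun k : ℕ => a ^ k) =O[atTop] fun k => (r : ℝ) ^ k := by
  refine IsBigO.of_bound 1 ?_
  filter_upwards [(pow_norm_pow_one_div_tendsto_nhds_spectralRadius a).eventually_lt_const h,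
    eventually_gt_atTop 0] with k hk hk0
  rw [ENNReal.ofReal_lt_iff_lt_toReal (by positivity) (by simp), ENNReal.coe_toReal, one_div] at hk
  have := (Real.rpow_inv_lt_iff_of_pos (norm_nonneg (a ^ k)) r.2 (Nat.cast_pos.2 hk0)).1 hk
  simpa using this.le

theorem NormedSpace.isBigO_exp_smul_of_isBigO_pow {𝔸 : Type*} [NormedRing 𝔸] [NormedAlgebra ℝ 𝔸]
    [NormedAlgebra ℚ 𝔸] [CompleteSpace 𝔸] {a : 𝔸} {α : ℝ}
    (h : (fun k : ℕ => exp a ^ k) =O[atTop] fun k => Real.exp (α * k)) :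
    (fun t : ℝ => exp (t • a)) =O[atTop] fun t => Real.exp (α * t) := by
  have hsplit (t : ℝ) : exp (t • a) = exp a ^ ⌊t⌋₊ * exp ((t - ⌊t⌋₊) • a) := by
    rw [← exp_nsmul, ← exp_add_of_commute ((Commute.refl a).smul_left _ |>.smul_right _),
      ← Nat.cast_smul_eq_nsmul ℝ, ← add_smul, add_sub_cancel]
  have hfloor : (fun t : ℝ => Real.exp (α * ⌊t⌋₊)) =O[atTop] fun t => Real.exp (α * t) := by
    refine IsBigO.of_bound (Real.exp |α|) ?_
    filter_upwards [eventually_ge_atTop 0] with t ht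
    have h0 := Nat.floor_le ht
    have h1 := Nat.lt_floor_add_one t
    rw [Real.norm_of_nonneg (Real.exp_pos _).le, Real.norm_of_nonneg (Real.exp_pos _).le,
      ← Real.exp_add, Real.exp_le_exp]
    cases abs_cases α <;> nlinarith
  have hcont : Continuous fun s : ℝ => exp (s • a) :=
    exp_continuous.comp (continuous_id.smul continuous_const)
  obtain ⟨M, hM⟩ := (isCompact_Icc (a := (0 : ℝ)) (b := 1)).exists_bound_of_continuousOn
    hcont.continuousOn
  have hfract : (fun t : ℝ => exp ((t - ⌊t⌋₊) • a)) =O[atTop] fun _ => (1 : ℝ) := by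
    refine IsBigO.of_bound M ?_
    filter_upwards [eventually_ge_atTop 0] with t ht
    simpa using hM _ ⟨sub_nonneg.2 (Nat.floor_le ht), by linarith [Nat.lt_floor_add_one t]⟩
  rw [funext hsplit]
  simpa only [mul_one, Function.comp_def] using
    ((h.comp_tendsto tendsto_nat_floor_atTop).trans hfloor).mul hfract

section Sylvester

variable {𝔸 : Type*} [NormedRing 𝔸] [NormedAlgebra ℝ 𝔸] [CompleteSpace 𝔸]

theorem hasDerivAt_exp_smul_mul_mul_exp_smul (a b q : 𝔸) (t : ℝ) :
    HasDerivAt (fun s : ℝ => exp (s • b) * q * exp (s • a))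
      (b * (exp (t • b) * q * exp (t • a)) + exp (t • b) * q * exp (t • a) * a) t := by
  refine (((hasDerivAt_exp_smul_const' b t).mul_const q).mul
    (hasDerivAt_exp_smul_const a t)).congr_deriv ?_
  noncomm_ring

theorem mul_integral_add_integral_mul_eq_neg {a b q : 𝔸}
    (hint : IntegrableOn (fun t : ℝ => exp (t • b) * q * exp (t • a)) (Ioi 0))
    (hlim : Tendsto (fun t : ℝ => exp (t • b) * q * exp (t • a)) atTop (𝓝 0)) :
    b * (∫ t in Ioi (0 : ℝ), exp (t • b) * q * exp (t • a)) +
      (∫ t in Ioi (0 : ℝ), exp (t • b) * q * exp (t • a)) * a = -q := by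
  have hderiv := hasDerivAt_exp_smul_mul_mul_exp_smul a b q
  have hFTC := integral_Ioi_of_hasDerivAt_of_tendsto
    (hderiv 0).continuousAt.continuousWithinAt (fun t _ => hderiv t)
    ((hint.const_mul b).add (hint.mul_const a)) hlim
  rw [integral_add (hint.const_mul b) (hint.mul_const a), integral_const_mul_of_integrable hint,
    integral_mul_const_of_integrable hint] at hFTC
  simpa using hFTC

end Sylvester

theorem Module.End.exists_hasEigenvector_mem_eigenspace_of_commute {K V : Type*} [Field K]
    [IsAlgClosed K] [AddCommGroup V] [Module K V] [FiniteDimensional K V] {f g : Module.End K V}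
    (h : Commute f g) {μ : K} (hμ : f.HasEigenvalue μ) :
    ∃ c v, g.HasEigenvector c v ∧ v ∈ f.eigenspace μ := by
  have hmaps : ∀ x ∈ f.eigenspace μ, g x ∈ f.eigenspace μ := fun x hx =>
    (Module.End.mapsTo_genEigenspace_of_comm h μ 1) hx
  obtain ⟨w, hw⟩ := hμ.exists_hasEigenvector
  have : Nontrivial (f.eigenspace μ) := ⟨⟨⟨w, hw.1⟩, 0, fun h0 => hw.2 (congrArg Subtype.val h0)⟩⟩
  obtain ⟨c, hc⟩ := Module.End.exists_eigenvalue (g.restrict hmaps)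
  obtain ⟨v, hv⟩ := hc.exists_hasEigenvector
  refine ⟨c, v, ⟨?_, fun h0 => hv.2 (Subtype.ext h0)⟩, v.2⟩
  rw [Module.End.mem_eigenspace_iff]
  exact congrArg Subtype.val hv.apply_eq_smul

/- Instance search does not see that the topology of the `L∞` operator norm is the product
topology carried by `Matrix`, so the `ContinuousENorm` behind `Integrable` is supplied by hand. -/
noncomputable abbrev Matrix.linftyOpContinuousENorm {m n : Type*} [Fintype m] [Fintype n] :
    ContinuousENorm (Matrix m n ℝ) :=
  SeminormedAddGroup.toContinuousENorm

attribute [local instance] Matrix.linftyOpContinuousENorm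

namespace Matrix

variable {m : Type*} [Fintype m]

theorem linfty_opNorm_map_ofReal {n : Type*} [Fintype n] (M : Matrix m n ℝ) :
    ‖M.map (algebraMap ℝ ℂ)‖ = ‖M‖ := by
  simp [linfty_opNorm_def]

section Exp

variable [DecidableEq m]

theorem exp_mulVec_of_mulVec_eq_smul {B : Matrix m m ℂ} {c : ℂ} {v : m → ℂ}
    (h : B *ᵥ v = c • v) : exp B *ᵥ v = Complex.exp c • v := by
  have hpow (k : ℕ) : (B ^ k) *ᵥ v = c ^ k • v := by
    induction k with
    | zero => simp
    | succ k ih => rw [pow_succ, ← mulVec_mulVec, h, mulVec_smul, ih, smul_smul, pow_succ']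
  have hsum := (exp_series_hasSum_exp' (𝕂 := ℂ) B).mapL
    (LinearMap.toContinuousLinearMap ((mulVecBilin ℂ ℂ).flip v))
  simp only [LinearMap.coe_toContinuousLinearMap', LinearMap.flip_apply, mulVecBilin_apply,
    smul_mulVec, hpow, smul_smul] at hsum
  rw [Complex.exp_eq_exp_ℂ]
  exact hsum.unique ((exp_series_hasSum_exp' (𝕂 := ℂ) c).smul_const v)

theorem spectrum_exp_subset (B : Matrix m m ℂ) :
    spectrum ℂ (exp B) ⊆ Complex.exp '' spectrum ℂ B := by
  intro μ hμ
  rw [← spectrum_toLin', ← Module.End.hasEigenvalue_iff_mem_spectrum] at hμ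
  have hcomm : Commute (exp B).toLin' B.toLin' := ((Commute.refl B).exp_left).map toLinAlgEquiv'
  obtain ⟨c, v, hv, hvμ⟩ := Module.End.exists_hasEigenvector_mem_eigenspace_of_commute hcomm hμ
  refine ⟨c, ?_, ?_⟩
  · rw [← spectrum_toLin', ← Module.End.hasEigenvalue_iff_mem_spectrum]
    exact Module.End.hasEigenvalue_of_hasEigenvector hv
  · have hexp := exp_mulVec_of_mulVec_eq_smul (by simpa using hv.apply_eq_smul)
    rw [Module.End.mem_eigenspace_iff, toLin'_apply, hexp] at hvμ
    exact smul_left_injective ℂ hv.2 hvμ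

theorem map_ofReal_exp (M : Matrix m m ℝ) :
    (exp M).map (algebraMap ℝ ℂ) = exp (M.map (algebraMap ℝ ℂ)) :=
  map_exp (algebraMap ℝ ℂ).mapMatrix (continuous_id.matrix_map Complex.continuous_ofReal) M

theorem exists_isBigO_exp_smul_of_forall_re_neg {A : Matrix m m ℝ}
    (hA : ∀ μ ∈ spectrum ℂ (A.map (algebraMap ℝ ℂ)), μ.re < 0) :
    ∃ α > 0, (fun t : ℝ => exp (t • A)) =O[atTop] fun t => Real.exp (-α * t) := by
  set B := A.map (algebraMap ℝ ℂ)
  have hρ : spectralRadius ℂ (exp B) < 1 := by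
    refine spectrum.spectralRadius_lt_of_forall_lt_of_pos _ one_pos fun μ hμ => ?_
    obtain ⟨z, hz, rfl⟩ := spectrum_exp_subset B hμ
    rw [← NNReal.coe_lt_coe, coe_nnnorm, Complex.norm_exp, NNReal.coe_one, Real.exp_lt_one_iff]
    exact hA z hz
  obtain ⟨r, hρr, hr1⟩ := ENNReal.lt_iff_exists_nnreal_btwn.mp hρ
  have hr0 : (0 : ℝ) < r := by exact_mod_cast pos_of_gt hρr
  have hr1' : (r : ℝ) < 1 := by exact_mod_cast hr1
  refine ⟨-Real.log r, neg_pos.2 (Real.log_neg hr0 hr1'), ?_⟩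
  simp only [neg_neg]
  refine isBigO_exp_smul_of_isBigO_pow ?_
  have hpowA : (fun k : ℕ => exp A ^ k) =O[atTop] fun k => exp B ^ k :=
    isBigO_of_le _ fun k => by
      rw [← linfty_opNorm_map_ofReal, Matrix.map_pow, map_ofReal_exp]
  refine (hpowA.trans (spectrum.isBigO_pow_of_spectralRadius_lt hρr)).congr_right fun k => ?_
  rw [mul_comm, Real.exp_nat_mul, Real.exp_log hr0]

end Exp

theorem PosDef.integral {X : Type*} [MeasurableSpace X] {μ : Measure X} (hμ : μ ≠ 0)
    {f : X → Matrix m m ℝ} (hf : Integrable f μ) (hpos : ∀ x, (f x).PosDef) :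
    (∫ x, f x ∂μ).PosDef := by
  refine .of_dotProduct_mulVec_pos ?_ fun v hv => ?_
  · let T := LinearMap.toContinuousLinearMap (transposeLinearEquiv m m ℝ ℝ).toLinearMap
    calc (∫ x, f x ∂μ)ᴴ = ∫ x, (f x)ᴴ ∂μ := (T.integral_comp_comm hf).symm
      _ = ∫ x, f x ∂μ := by simp_rw [fun x => (hpos x).isHermitian.eq]
  · let q := LinearMap.toContinuousLinearMap (dotProductBilin ℝ ℝ v ∘ₗ (mulVecBilin ℝ ℝ).flip v)
    have hq : ∀ M : Matrix m m ℝ, q M = star v ⬝ᵥ M *ᵥ v := fun M => rfl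
    have hint : ∫ x, q (f x) ∂μ = q (∫ x, f x ∂μ) := q.integral_comp_comm hf
    have hqpos (x : X) : 0 < q (f x) := (hpos x).dotProduct_mulVec_pos hv
    rw [← hq, ← hint, integral_pos_iff_support_of_nonneg (fun x => (hqpos x).le)
      (q.integrable_comp hf), Function.support_eq_univ fun x => (hqpos x).ne',
      Measure.measure_univ_pos]
    exact hμ

end Matrix

theorem hurwitz_lyapunov_equation {n : ℕ} (A : Matrix (Fin n) (Fin n) ℝ)
    (hA : ∀ μ ∈ spectrum ℂ (A.map (algebraMap ℝ ℂ)), μ.re < 0) :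
    ∀ Q : Matrix (Fin n) (Fin n) ℝ, Q.PosDef →
      ∃ P : Matrix (Fin n) (Fin n) ℝ, P.PosDef ∧ P * A + Aᵀ * P + Q = 0 := by
  intro Q hQ
  obtain ⟨α, hα, hdecay⟩ := exists_isBigO_exp_smul_of_forall_re_neg hA
  set f : ℝ → Matrix (Fin n) (Fin n) ℝ := fun t => exp (t • Aᵀ) * Q * exp (t • A)
  have hf_posDef (t : ℝ) : (f t).PosDef := by
    have := hQ.conjTranspose_mul_mul_same (mulVec_injective_of_isUnit (Matrix.isUnit_exp (t • A)))
    rw [conjTranspose_eq_transpose_of_trivial] at this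
    show (exp (t • Aᵀ) * Q * exp (t • A)).PosDef
    rwa [← transpose_smul, exp_transpose]
  have hT : (fun t : ℝ => exp (t • Aᵀ)) =O[atTop] fun t => exp (t • A) := by
    let T := LinearMap.toContinuousLinearMap (transposeLinearEquiv (Fin n) (Fin n) ℝ ℝ).toLinearMap
    refine (T.isBigO_comp (fun t : ℝ => exp (t • A)) atTop).congr_left fun t => ?_
    rw [← transpose_smul, exp_transpose]
    rfl
  have hf_bigO : f =O[atTop] fun t => Real.exp (-(2 * α) * t) := by
    refine ((hT.trans hdecay).mul (isBigO_const_const Q one_ne_zero atTop)).mul hdecay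
      |>.congr_right fun t => ?_
    rw [mul_one, ← Real.exp_add]; ring_nf
  have hf_int : IntegrableOn f (Ioi 0) := integrableOn_Ioi_of_isBigO_exp_neg (by positivity)
    (by fun_prop) hf_bigO
  have hf_lim : Tendsto f atTop (𝓝 0) := hf_bigO.trans_tendsto <|
    Real.tendsto_exp_atBot.comp <| tendsto_id.const_mul_atTop_of_neg (by linarith)
  refine ⟨∫ t in Ioi 0, f t, .integral (by simp) hf_int hf_posDef, ?_⟩
  rw [add_comm (_ * A)]
  exact add_eq_zero_iff_eq_neg.2 (mul_integral_add_integral_mul_eq_neg hf_int hf_lim)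
end

section
/- Let A be an n×n real matrix. If there exist symmetric positive definite matrices P and Q with P A + Aᵀ P + Q = 0, then the origin is an asymptotically stable equilibrium of the linear system x' = A x; in particular every solution x(t) = exp(A t) x₀ tends to 0 as t → ∞. -/
/-!
Along a trajectory `x t = exp (t • A) *ᵥ x₀` the Lyapunov function `V = xᵀ P x` satisfies
`V' = -xᵀ Q x`. In finite dimension any two positive definite quadratic forms are comparable, so
`V' ≤ -c V` for some `c > 0`, and Grönwall gives `V (x t) ≤ e^{-ct} V x₀`. Comparing `V` with
`‖·‖²` on both sides turns this into exponential decay `‖x t‖ ≤ K e^{-ct/2} ‖x₀‖`, which yields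
both stability and convergence.
-/

open Matrix Filter Topology

theorem norm_smul_sq {E : Type*} [SeminormedAddCommGroup E] [NormedSpace ℝ E] (c : ℝ) (x : E) :
    ‖c • x‖ ^ 2 = c ^ 2 * ‖x‖ ^ 2 := by
  rw [norm_smul, mul_pow, Real.norm_eq_abs, sq_abs]

theorem exists_pos_mul_le_of_homogeneous {E : Type*} [NormedAddCommGroup E] [NormedSpace ℝ E]
    [FiniteDimensional ℝ E] {f g : E → ℝ} (hf : Continuous f) (hg : Continuous g)
    (hf_smul : ∀ (c : ℝ) x, f (c • x) = c ^ 2 * f x)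
    (hg_smul : ∀ (c : ℝ) x, g (c • x) = c ^ 2 * g x)
    (hf_pos : ∀ x ≠ 0, 0 < f x) (hg_pos : ∀ x ≠ 0, 0 < g x) :
    ∃ c > 0, ∀ x, c * f x ≤ g x := by
  have hS : ∀ u ∈ Metric.sphere (0 : E) 1, u ≠ 0 := fun u hu =>
    ne_zero_of_mem_unit_sphere ⟨u, hu⟩
  obtain ⟨c, hc, hcS⟩ := (isCompact_sphere (0 : E) 1).exists_forall_le'
    (hg.continuousOn.div hf.continuousOn fun u hu => (hf_pos u (hS u hu)).ne')
    (a := 0) fun u hu => div_pos (hg_pos u (hS u hu)) (hf_pos u (hS u hu))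
  refine ⟨c, hc, fun x => ?_⟩
  obtain rfl | hx := eq_or_ne x 0
  · have hf0 : f 0 = 0 := by simpa using hf_smul 0 0
    have hg0 : g 0 = 0 := by simpa using hg_smul 0 0
    simp [hf0, hg0]
  have hu : ‖x‖⁻¹ • x ∈ Metric.sphere (0 : E) 1 := by simp [norm_smul, hx]
  have hcu := (le_div_iff₀ (hf_pos _ (hS _ hu))).1 (hcS _ hu)
  have hx' : x = ‖x‖ • ‖x‖⁻¹ • x := by simp [smul_smul, hx]
  rw [hx', hf_smul, hg_smul]
  nlinarith [sq_nonneg ‖x‖]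

theorem le_mul_exp_neg_of_hasDerivAt_le {V V' : ℝ → ℝ} {c t : ℝ}
    (hV : ∀ s, HasDerivAt V (V' s) s) (hle : ∀ s, V' s ≤ -c * V s) (ht : 0 ≤ t) :
    V t ≤ V 0 * Real.exp (-c * t) := by
  have := le_gronwallBound_of_liminf_deriv_right_le (a := 0) (b := t) (K := -c) (ε := 0)
    (fun s _ => (hV s).continuousAt.continuousWithinAt)
    (fun s _ _ hr => (hV s).hasDerivWithinAt.liminf_right_slope_le hr) le_rfl
    (fun s _ => (add_zero (-c * V s)).symm ▸ hle s) t ⟨ht, le_rfl⟩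
  simpa [gronwallBound_ε0] using this

variable {m : Type*} [Fintype m]

theorem HasDerivAt.dotProduct {x y : ℝ → m → ℝ} {x' y' : m → ℝ} {t : ℝ}
    (hx : HasDerivAt x x' t) (hy : HasDerivAt y y' t) :
    HasDerivAt (fun s => x s ⬝ᵥ y s) (x' ⬝ᵥ y t + x t ⬝ᵥ y') t := by
  unfold _root_.dotProduct
  rw [← Finset.sum_add_distrib]
  exact HasDerivAt.fun_sum fun i _ => (hasDerivAt_pi.1 hx i).mul (hasDerivAt_pi.1 hy i)

theorem HasDerivAt.mulVec {n : Type*} [Fintype n] (P : Matrix n m ℝ) {x : ℝ → m → ℝ}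
    {x' : m → ℝ} {t : ℝ} (hx : HasDerivAt x x' t) :
    HasDerivAt (fun s => P *ᵥ x s) (P *ᵥ x') t :=
  (mulVecLin P).toContinuousLinearMap.hasFDerivAt.comp_hasDerivAt t hx

theorem Matrix.dotProduct_mulVec_self_smul (P : Matrix m m ℝ) (c : ℝ) (x : m → ℝ) :
    c • x ⬝ᵥ P *ᵥ (c • x) = c ^ 2 * (x ⬝ᵥ P *ᵥ x) := by
  rw [mulVec_smul, smul_dotProduct, dotProduct_smul, smul_eq_mul, smul_eq_mul, sq, mul_assoc]

theorem Matrix.PosDef.dotProduct_mulVec_self_pos {P : Matrix m m ℝ} (hP : P.PosDef)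
    {x : m → ℝ} (hx : x ≠ 0) : 0 < x ⬝ᵥ P *ᵥ x := by
  simpa using hP.dotProduct_mulVec_pos hx

theorem Matrix.PosDef.exists_pos_mul_le_dotProduct_mulVec {P Q : Matrix m m ℝ} (hP : P.PosDef)
    (hQ : Q.PosDef) : ∃ c > 0, ∀ x : m → ℝ, c * (x ⬝ᵥ P *ᵥ x) ≤ x ⬝ᵥ Q *ᵥ x :=
  exists_pos_mul_le_of_homogeneous (by fun_prop) (by fun_prop) P.dotProduct_mulVec_self_smul
    Q.dotProduct_mulVec_self_smul (fun _ => hP.dotProduct_mulVec_self_pos)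
    (fun _ => hQ.dotProduct_mulVec_self_pos)

theorem Matrix.PosDef.exists_pos_mul_norm_sq_le {P : Matrix m m ℝ} (hP : P.PosDef) :
    ∃ a > 0, ∀ x : m → ℝ, a * ‖x‖ ^ 2 ≤ x ⬝ᵥ P *ᵥ x :=
  exists_pos_mul_le_of_homogeneous (by fun_prop) (by fun_prop) norm_smul_sq
    P.dotProduct_mulVec_self_smul (fun _ hx => by positivity)
    (fun _ => hP.dotProduct_mulVec_self_pos)

theorem Matrix.PosDef.exists_pos_mul_le_norm_sq {P : Matrix m m ℝ} (hP : P.PosDef) :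
    ∃ b > 0, ∀ x : m → ℝ, b * (x ⬝ᵥ P *ᵥ x) ≤ ‖x‖ ^ 2 :=
  exists_pos_mul_le_of_homogeneous (by fun_prop) (by fun_prop) P.dotProduct_mulVec_self_smul
    norm_smul_sq (fun _ => hP.dotProduct_mulVec_self_pos) (fun _ hx => by positivity)

theorem Matrix.dotProduct_mulVec_add_eq_neg_of_lyapunov {A P Q : Matrix m m ℝ}
    (hPQ : P * A + Aᵀ * P + Q = 0) (v : m → ℝ) :
    A *ᵥ v ⬝ᵥ P *ᵥ v + v ⬝ᵥ P *ᵥ (A *ᵥ v) = -(v ⬝ᵥ Q *ᵥ v) := by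
  have hQ : Q = -(Aᵀ * P + P * A) := by rw [← sub_eq_zero, ← hPQ]; abel
  rw [hQ, neg_mulVec, dotProduct_neg, neg_neg, add_mulVec, dotProduct_add, ← mulVec_mulVec,
    ← mulVec_mulVec, dotProduct_mulVec v Aᵀ, vecMul_transpose]

variable [DecidableEq m]

theorem Matrix.hasDerivAt_exp_smul_mulVec (A : Matrix m m ℝ) (x₀ : m → ℝ) (t : ℝ) :
    HasDerivAt (fun s : ℝ => NormedSpace.exp (s • A) *ᵥ x₀)
      (A *ᵥ (NormedSpace.exp (t • A) *ᵥ x₀)) t := by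
  let : NormedRing (Matrix m m ℝ) := Matrix.linftyOpNormedRing
  let : NormedAlgebra ℝ (Matrix m m ℝ) := Matrix.linftyOpNormedAlgebra
  rw [mulVec_mulVec]
  exact ((mulVecBilin ℝ ℝ).flip x₀).toContinuousLinearMap.hasFDerivAt.comp_hasDerivAt t
    (hasDerivAt_exp_smul_const' A t)

theorem Matrix.dotProduct_mulVec_exp_smul_mulVec_le {A P Q : Matrix m m ℝ} {c : ℝ}
    (hPQ : P * A + Aᵀ * P + Q = 0) (hQ : ∀ x : m → ℝ, c * (x ⬝ᵥ P *ᵥ x) ≤ x ⬝ᵥ Q *ᵥ x)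
    (x₀ : m → ℝ) {t : ℝ} (ht : 0 ≤ t) :
    NormedSpace.exp (t • A) *ᵥ x₀ ⬝ᵥ P *ᵥ (NormedSpace.exp (t • A) *ᵥ x₀) ≤
      x₀ ⬝ᵥ P *ᵥ x₀ * Real.exp (-c * t) := by
  set x : ℝ → m → ℝ := fun s => NormedSpace.exp (s • A) *ᵥ x₀
  have hV : ∀ s, HasDerivAt (fun s => x s ⬝ᵥ P *ᵥ x s) (-(x s ⬝ᵥ Q *ᵥ x s)) s := fun s => by
    have hx := hasDerivAt_exp_smul_mulVec A x₀ s
    simpa only [dotProduct_mulVec_add_eq_neg_of_lyapunov hPQ] using hx.dotProduct (hx.mulVec P)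
  simpa [x] using le_mul_exp_neg_of_hasDerivAt_le hV (fun s => by linarith [hQ (x s)]) ht

theorem Matrix.exists_norm_exp_smul_mulVec_le_of_lyapunov {A P Q : Matrix m m ℝ}
    (hP : P.PosDef) (hQ : Q.PosDef) (hPQ : P * A + Aᵀ * P + Q = 0) :
    ∃ K > 0, ∃ α > 0, ∀ x₀ : m → ℝ, ∀ t, 0 ≤ t →
      ‖NormedSpace.exp (t • A) *ᵥ x₀‖ ≤ K * Real.exp (-(α * t)) * ‖x₀‖ := by
  obtain ⟨a, ha, hPa⟩ := hP.exists_pos_mul_norm_sq_le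
  obtain ⟨b, hb, hPb⟩ := hP.exists_pos_mul_le_norm_sq
  obtain ⟨c, hc, hQc⟩ := hP.exists_pos_mul_le_dotProduct_mulVec hQ
  refine ⟨√(a * b)⁻¹, by positivity, c / 2, by positivity, fun x₀ t ht => ?_⟩
  set x := NormedSpace.exp (t • A) *ᵥ x₀
  have hsq : a * b * ‖x‖ ^ 2 ≤ ‖x₀‖ ^ 2 * Real.exp (-c * t) := calc
    a * b * ‖x‖ ^ 2 = b * (a * ‖x‖ ^ 2) := by ring
    _ ≤ b * (x ⬝ᵥ P *ᵥ x) := by gcongr; exact hPa x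
    _ ≤ b * (x₀ ⬝ᵥ P *ᵥ x₀) * Real.exp (-c * t) := by
      rw [mul_assoc]; gcongr; exact dotProduct_mulVec_exp_smul_mulVec_le hPQ hQc x₀ ht
    _ ≤ ‖x₀‖ ^ 2 * Real.exp (-c * t) := by gcongr; exact hPb x₀
  refine (pow_le_pow_iff_left₀ (norm_nonneg _) (by positivity) two_ne_zero).1 ?_
  have hrate : ((2 : ℕ) : ℝ) * -(c / 2 * t) = -c * t := by push_cast; ring
  rw [mul_pow, mul_pow, Real.sq_sqrt (by positivity), ← Real.exp_nat_mul, hrate, inv_mul_eq_div,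
    div_mul_eq_mul_div, le_div_iff₀ (by positivity)]
  linarith

theorem lyapunov_implies_asymptotic_stability {n : ℕ} (A : Matrix (Fin n) (Fin n) ℝ)
    (h : ∃ P Q : Matrix (Fin n) (Fin n) ℝ, P.PosDef ∧ Q.PosDef ∧
      P * A + Aᵀ * P + Q = 0) :
    (∀ ε > (0 : ℝ), ∃ δ > (0 : ℝ), ∀ x₀ : Fin n → ℝ, ‖x₀‖ < δ → ∀ t : ℝ, 0 ≤ t →
        ‖(NormedSpace.exp (t • A)).mulVec x₀‖ < ε) ∧
    ∀ x₀ : Fin n → ℝ,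
      Filter.Tendsto (fun t : ℝ => (NormedSpace.exp (t • A)).mulVec x₀)
        Filter.atTop (nhds 0) := by
  obtain ⟨P, Q, hP, hQ, hPQ⟩ := h
  obtain ⟨K, hK, α, hα, hbound⟩ := exists_norm_exp_smul_mulVec_le_of_lyapunov hP hQ hPQ
  refine ⟨fun ε hε => ⟨ε / K, div_pos hε hK, fun x₀ hx₀ t ht => ?_⟩, fun x₀ => ?_⟩
  · have hexp : Real.exp (-(α * t)) ≤ 1 := Real.exp_le_one_iff.2 (neg_nonpos.2 (by positivity))
    calc ‖NormedSpace.exp (t • A) *ᵥ x₀‖ ≤ K * Real.exp (-(α * t)) * ‖x₀‖ := hbound x₀ t ht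
      _ ≤ K * ‖x₀‖ := by gcongr; exact mul_le_of_le_one_right hK.le hexp
      _ < ε := (lt_div_iff₀' hK).1 hx₀
  · have hdecay : Tendsto (fun t => K * Real.exp (-(α * t)) * ‖x₀‖) atTop (𝓝 0) := by
      simpa using ((Real.tendsto_exp_neg_atTop_nhds_zero.comp
        (tendsto_id.const_mul_atTop hα)).const_mul K).mul_const ‖x₀‖
    exact squeeze_zero_norm' ((eventually_ge_atTop 0).mono fun t ht => hbound x₀ t ht) hdecay
end
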